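/- Let N_{n,k} denote the Lucas-Narayana numbers and {n choose k} the Lucasnomials, as elements of the fraction field K of ℤ[s,t]. For all integers n ≥ 1 and 2 ≤ k ≤ n-1, N_{n,k} = {n-1 choose k-1}² + t·{n-1 choose k}·{n-1 choose k-2}. -/
import Mathlib


open MvPolynomial

/-- The polynomial ring ℤ[s,t] (s = X 0, t = X 1). -/
abbrev R := MvPolynomial (Fin 2) ℤ

/-- The fraction field of ℤ[s,t]. -/
abbrev K := FractionRing R

/-- The generalized Lucas polynomials: {0} = 0, {1} = 1, {n} = s·{n-1} + t·{n-2}. -/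
noncomputable def lucas : ℕ → R
  | 0 => 0
  | 1 => 1
  | n + 2 => X 0 * lucas (n + 1) + X 1 * lucas n

/-- The Lucastorial {n}! = {n}·{n-1}⋯{2}·{1}, with {0}! = 1. -/
noncomputable def lucasFact : ℕ → R
  | 0 => 1
  | n + 1 => lucas (n + 1) * lucasFact n

/-- The Lucasnomial {n choose k} = {n}!/({k}!·{n-k}!) as an element of K. -/
noncomputable def lucasBinom (n k : ℕ) : K :=
  algebraMap R K (lucasFact n) /
    (algebraMap R K (lucasFact k) * algebraMap R K (lucasFact (n - k)))

/-- The Lucas-Narayana number N_{n,k} = (1/{n})·{n choose k}·{n choose k-1} in K. -/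
noncomputable def lucasNarayana (n k : ℕ) : K :=
  (algebraMap R K (lucas n))⁻¹ * lucasBinom n k * lucasBinom n (k - 1)

/-- Addition formula for generalized Lucas polynomials. -/
lemma lucas_add (a b : ℕ) :
    lucas (a + b + 1) = lucas (a + 1) * lucas (b + 1) + X 1 * lucas a * lucas b := by
  induction b using Nat.twoStepInduction generalizing a with
  | zero => simp [lucas]
  | one =>
      show lucas (a + 2) = _ * lucas 2 + _ * lucas 1
      simp [lucas]; ring
  | more b ih1 ih2 =>
      have h1 := ih1 (a := a)
      have h2 := ih2 (a := a)
      show lucas (a + b + 3) = _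
      have : a + b + 3 = (a + b + 1) + 2 := by ring
      rw [this]
      show X 0 * lucas (a + b + 1 + 1) + X 1 * lucas (a + b + 1) = _
      have e1 : a + b + 1 + 1 = a + (b+1) + 1 := by ring
      rw [e1, h2, h1]
      show _ = lucas (a+1) * lucas (b + 3) + _
      have : lucas (b + 3) = X 0 * lucas (b + 2) + X 1 * lucas (b+1) := rfl
      rw [this]
      have : lucas (b + 2) = X 0 * lucas (b + 1) + X 1 * lucas b := rfl
      rw [this]
      ring

lemma eval_lucas (m : ℕ) : eval ![1, 0] (lucas (m + 1)) = 1 := by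
  induction m using Nat.twoStepInduction with
  | zero => simp [lucas]
  | one =>
      show eval ![1,0] (X 0 * lucas 1 + X 1 * lucas 0) = 1
      simp [lucas]
  | more m ih1 ih2 =>
      show eval ![1,0] (X 0 * lucas (m + 2) + X 1 * lucas (m+1)) = 1
      simp [ih1, ih2]

lemma lucas_ne_zero (m : ℕ) : lucas (m + 1) ≠ 0 := fun h => by
  have := eval_lucas m; rw [h] at this; simp at this

lemma lucasFact_ne_zero (m : ℕ) : lucasFact m ≠ 0 := by
  induction m with
  | zero => simp [lucasFact]
  | succ m ih => exact mul_ne_zero (lucas_ne_zero m) ih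

set_option synthInstance.maxHeartbeats 1000000 in
set_option maxHeartbeats 2000000 in
/-- For n ≥ 1 and 2 ≤ k ≤ n-1,
N_{n,k} = {n-1 choose k-1}² + t·{n-1 choose k}·{n-1 choose k-2}. -/
theorem lucasNarayana_eq_binom (n k : ℕ) (hn : 1 ≤ n) (h2 : 2 ≤ k) (hk : k ≤ n - 1) :
    lucasNarayana n k =
      lucasBinom (n - 1) (k - 1) ^ 2
        + algebraMap R K (X 1) * lucasBinom (n - 1) k * lucasBinom (n - 1) (k - 2) := by
  obtain ⟨a, rfl⟩ : ∃ a, k = a + 2 := ⟨k - 2, by omega⟩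
  obtain ⟨b, rfl⟩ : ∃ b, n = a + b + 3 := ⟨n - (a + 3), by omega⟩
  have Fne : ∀ m : ℕ, algebraMap R K (lucasFact m) ≠ 0 := fun m =>
    (map_ne_zero_iff _ (IsFractionRing.injective R K)).mpr (lucasFact_ne_zero m)
  have Lne : algebraMap R K (lucas (a + b + 3)) ≠ 0 :=
    (map_ne_zero_iff _ (IsFractionRing.injective R K)).mpr (lucas_ne_zero (a + b + 2))
  have i1 : a + b + 3 - 1 = a + b + 2 := by omega
  have i2 : a + 2 - 1 = a + 1 := by omega
  have i3 : a + 2 - 2 = a := by omega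
  have i4 : a + b + 3 - (a + 2) = b + 1 := by omega
  have i5 : a + b + 3 - (a + 1) = b + 2 := by omega
  have i6 : a + b + 2 - (a + 1) = b + 1 := by omega
  have i7 : a + b + 2 - (a + 2) = b := by omega
  have i8 : a + b + 2 - a = b + 2 := by omega
  simp only [lucasNarayana, lucasBinom, i1, i2, i3, i4, i5, i6, i7, i8]
  have f0 := Fne 0
  have fa := Fne a
  have fb := Fne b
  have fa1 := Fne (a+1)
  have fb1 := Fne (b+1)
  have fa2 := Fne (a+2)
  have fb2 := Fne (b+2)
  have fab2 := Fne (a+b+2)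
  have fab3 := Fne (a+b+3)
  field_simp
  simp only [← map_mul, ← map_pow, ← map_add]
  refine congrArg (algebraMap R K) ?_
  have key := lucas_add (a + 1) (b + 1)
  have e : a + 1 + (b + 1) + 1 = a + b + 3 := by omega
  rw [e] at key
  have e1 : lucasFact (a + b + 3) = lucas (a + b + 3) * lucasFact (a + b + 2) := rfl
  have e2 : lucasFact (a + 2) = lucas (a + 2) * lucasFact (a + 1) := rfl
  have e3 : lucasFact (a + 1) = lucas (a + 1) * lucasFact a := rfl
  have e4 : lucasFact (b + 2) = lucas (b + 2) * lucasFact (b + 1) := rfl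
  have e5 : lucasFact (b + 1) = lucas (b + 1) * lucasFact b := rfl
  rw [e1, e2, e3, e4, e5, key]
  ring
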